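/- Suppose that for a potential ψ on a countable Markov shift Σ(G), every topologically transitive sub-shift Σ(H) (H a subgraph of G) carries at most one equilibrium measure for ψ, and the support of such a measure is all of Σ(H). Then ψ has at most countably many ergodic equilibrium measures on Σ(G). -/

import Mathlib

open MeasureTheory
open scoped ENNReal

/-- The two-sided countable Markov shift. -/
abbrev CMS {V : Type*} (E : V → V → Prop) : Type _ :=
  {x : ℤ → V // ∀ i : ℤ, E (x i) (x (i + 1))}

/-- The two-sided left shift. -/
def shift2 {V : Type*} (E : V → V → Prop) : CMS E → CMS E :=
  fun x => ⟨fun i => x.1 (i + 1), fun i => x.2 (i + 1)⟩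

/-- Paths in a graph with edge relation `E'`. -/
def hasPath {V : Type*} (E' : V → V → Prop) (a b : V) (n : ℕ) : Prop :=
  ∃ f : ℕ → V, f 0 = a ∧ f n = b ∧ ∀ i < n, E' (f i) (f (i + 1))

/-- The vertices of the subgraph with edge relation `E'`. -/
def verts {V : Type*} (E' : V → V → Prop) : Set V :=
  {a | (∃ b, E' a b) ∨ (∃ b, E' b a)}

/-- The subgraph with edge relation `E'` is topologically transitive: any vertex connects to
any other by a path. -/
def TransGraph {V : Type*} (E' : V → V → Prop) : Prop :=
  ∀ a ∈ verts E', ∀ b ∈ verts E', ∃ n : ℕ, 1 ≤ n ∧ hasPath E' a b n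

/-- The sub-shift `Σ(H) ⊆ Σ(G)` determined by a sub-collection of edges `E' ≤ E`. -/
def subShift {V : Type*} (E E' : V → V → Prop) : Set (CMS E) :=
  {x | ∀ i : ℤ, E' (x.1 i) (x.1 (i + 1))}

/-- `μ` has full support on the sub-shift `Σ(H)`: every nonempty cylinder of `Σ(H)` has
positive measure. -/
def FullSupportOn {V : Type*} [MeasurableSpace V] (E E' : V → V → Prop) (μ : Measure (CMS E)) : Prop :=
  ∀ x ∈ subShift E E', ∀ m n : ℤ, m ≤ n →
    0 < μ {y ∈ subShift E E' | ∀ i : ℤ, m ≤ i → i ≤ n → y.1 i = x.1 i}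

/-!
An ergodic invariant measure `μ` lives on the subshift of the graph `H_μ` of edges `a → b` with
`μ(_0[a,b]) > 0`, and `H_μ` is transitive: by ergodicity some orbit through `[a]` reaches `[b]`
while following only edges of `H_μ`. If `H_μ₁` and `H_μ₂` share a vertex, their union is a
transitive subgraph whose subshift carries both measures, so uniqueness forces `μ₁ = μ₂`. Hence the
vertex sets of the graphs `H_μ` are nonempty and pairwise disjoint subsets of the countable set `V`.
-/

open Set

theorem Ergodic.exists_measure_inter_preimage_iterate_pos {α : Type*} [MeasurableSpace α]
    {f : α → α} {μ : Measure α} [IsFiniteMeasure μ] (hf : Ergodic f μ) {A B : Set α}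
    (hB : MeasurableSet B) (hA₀ : μ A ≠ 0) (hB₀ : μ B ≠ 0) :
    ∃ n, 1 ≤ n ∧ μ (A ∩ f^[n] ⁻¹' B) ≠ 0 := by
  set C := ⋃ n : ℕ, f^[n + 1] ⁻¹' B
  have hC : MeasurableSet C := .iUnion fun n => hf.measurable.iterate (n + 1) hB
  have hC_inv : f ⁻¹' C ⊆ C := by
    simp only [C, preimage_iUnion, ← preimage_comp, ← Function.iterate_succ]
    exact iUnion_subset fun n => subset_iUnion (fun m => f^[m + 1] ⁻¹' B) (n + 1)
  have hC₀ : μ C ≠ 0 := by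
    refine (measure_pos_of_superset (subset_iUnion _ 0) ?_).ne'
    rwa [(hf.toMeasurePreserving.iterate 1).measure_preimage hB.nullMeasurableSet]
  have hC_conull : μ Cᶜ = 0 := by
    rcases hf.ae_empty_or_univ_of_preimage_ae_le hC.nullMeasurableSet hC_inv.eventuallyLE with
      h | h
    · exact absurd (ae_eq_empty.mp h) hC₀
    · exact ae_eq_univ.mp h
  have hAC : μ (A ∩ C) ≠ 0 := by rwa [measure_inter_conull hC_conull]
  rw [inter_iUnion] at hAC
  obtain ⟨n, hn⟩ := exists_measure_pos_of_not_measure_iUnion_null hAC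
  exact ⟨n + 1, Nat.le_add_left 1 n, hn.ne'⟩

section Paths

variable {W : Type*} {E₁ E₂ : W → W → Prop}

theorem hasPath.mono (h : ∀ a b, E₁ a b → E₂ a b) {a b : W} {n : ℕ} :
    hasPath E₁ a b n → hasPath E₂ a b n := by
  rintro ⟨f, h₀, hn, hf⟩
  exact ⟨f, h₀, hn, fun i hi => h _ _ (hf i hi)⟩

theorem hasPath.append {a v b : W} {m n : ℕ} (h₁ : hasPath E₁ a v m) (h₂ : hasPath E₁ v b n) :
    hasPath E₁ a b (m + n) := by
  obtain ⟨f, hf₀, hfm, hf⟩ := h₁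
  obtain ⟨g, hg₀, hgn, hg⟩ := h₂
  set p : ℕ → W := fun i => if i ≤ m then f i else g (i - m)
  have hp_right : ∀ i, m ≤ i → p i = g (i - m) := by
    intro i hi
    rcases hi.eq_or_lt with rfl | hlt
    · simp [p, hfm, hg₀]
    · simp [p, Nat.not_le.mpr hlt]
  refine ⟨p, by simp [p, hf₀], by simp [hp_right, hgn], fun i hi => ?_⟩
  rcases Nat.lt_or_ge i m with hlt | hge
  · simpa [p, hlt.le, Nat.succ_le_of_lt hlt] using hf i hlt
  · rw [hp_right i hge, hp_right (i + 1) (by omega), Nat.sub_add_comm hge]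
    exact hg _ (by omega)

theorem verts_sup : verts (E₁ ⊔ E₂) = verts E₁ ∪ verts E₂ := by
  ext a
  simp only [verts, Pi.sup_apply, sup_Prop_eq, mem_ofPred_eq, mem_union, exists_or]
  tauto

theorem TransGraph.sup (h₁ : TransGraph E₁) (h₂ : TransGraph E₂) {v : W} (hv₁ : v ∈ verts E₁)
    (hv₂ : v ∈ verts E₂) : TransGraph (E₁ ⊔ E₂) := by
  have hle₁ : ∀ a b, E₁ a b → (E₁ ⊔ E₂) a b := fun _ _ => Or.inl
  have hle₂ : ∀ a b, E₂ a b → (E₁ ⊔ E₂) a b := fun _ _ => Or.inr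
  have to_v : ∀ a ∈ verts (E₁ ⊔ E₂), ∃ n, 1 ≤ n ∧ hasPath (E₁ ⊔ E₂) a v n := by
    intro a ha
    rcases verts_sup ▸ ha with ha | ha
    · obtain ⟨n, hn, p⟩ := h₁ a ha v hv₁
      exact ⟨n, hn, p.mono hle₁⟩
    · obtain ⟨n, hn, p⟩ := h₂ a ha v hv₂
      exact ⟨n, hn, p.mono hle₂⟩
  have from_v : ∀ b ∈ verts (E₁ ⊔ E₂), ∃ n, hasPath (E₁ ⊔ E₂) v b n := by
    intro b hb
    rcases verts_sup ▸ hb with hb | hb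
    · obtain ⟨n, -, p⟩ := h₁ v hv₁ b hb
      exact ⟨n, p.mono hle₁⟩
    · obtain ⟨n, -, p⟩ := h₂ v hv₂ b hb
      exact ⟨n, p.mono hle₂⟩
  intro a ha b hb
  obtain ⟨m, hm, p⟩ := to_v a ha
  obtain ⟨n, q⟩ := from_v b hb
  exact ⟨m + n, by omega, p.append q⟩

end Paths

section Shift

variable {V : Type*} {E E' : V → V → Prop}

theorem shift2_iterate_apply (n : ℕ) (x : CMS E) (i : ℤ) :
    ((shift2 E)^[n] x).1 i = x.1 (i + n) := by
  induction n generalizing x with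
  | zero => simp
  | succ n ih =>
    rw [Function.iterate_succ_apply, ih]
    simp only [shift2, Nat.cast_succ, add_assoc]

/-- The cylinder `_i[a, b]`. -/
def edgeCyl (E : V → V → Prop) (i : ℤ) (a b : V) : Set (CMS E) :=
  {x | x.1 i = a ∧ x.1 (i + 1) = b}

theorem preimage_iterate_edgeCyl (n : ℕ) (i : ℤ) (a b : V) :
    (shift2 E)^[n] ⁻¹' edgeCyl E i a b = edgeCyl E (i + n) a b := by
  ext x
  simp only [edgeCyl, mem_preimage, mem_ofPred_eq, shift2_iterate_apply, add_right_comm]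

theorem hasPath_of_mem_subShift {x : CMS E} (hx : x ∈ subShift E E') (n : ℕ) :
    hasPath E' (x.1 0) (x.1 n) n :=
  ⟨fun i => x.1 i, rfl, rfl, fun i _ => by simpa using hx i⟩

variable [MeasurableSpace V] {μ : Measure (CMS E)}

def supportGraph (E : V → V → Prop) (μ : Measure (CMS E)) : V → V → Prop :=
  fun a b => 0 < μ (edgeCyl E 0 a b)

theorem supportGraph_le {a b : V} (h : supportGraph E μ a b) : E a b := by
  obtain ⟨x, hxa, hxb⟩ := nonempty_of_measure_ne_zero h.ne'
  exact hxa ▸ hxb ▸ x.2 0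

theorem nonempty_verts_supportGraph [Countable V] [NeZero μ] :
    (verts (supportGraph E μ)).Nonempty := by
  have h : μ (⋃ p : V × V, edgeCyl E 0 p.1 p.2) ≠ 0 := by
    rw [iUnion_eq_univ_iff.2 fun x : CMS E => ⟨(x.1 0, x.1 1), by simp [edgeCyl]⟩]
    exact NeZero.ne _
  obtain ⟨p, hp⟩ := exists_measure_pos_of_not_measure_iUnion_null h
  exact ⟨p.1, .inl ⟨p.2, hp⟩⟩

variable [DiscreteMeasurableSpace V]

theorem measurableSet_coord_eq (i : ℤ) (a : V) : MeasurableSet {x : CMS E | x.1 i = a} :=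
  (measurable_subtype_coe.eval : Measurable fun x : CMS E => x.1 i) (measurableSet_singleton a)

theorem measurableSet_edgeCyl (i : ℤ) (a b : V) : MeasurableSet (edgeCyl E i a b) :=
  (measurableSet_coord_eq i a).inter (measurableSet_coord_eq (i + 1) b)

theorem measure_edgeCyl_eq (hμ : MeasurePreserving (shift2 E) μ μ) (i j : ℤ) (a b : V) :
    μ (edgeCyl E i a b) = μ (edgeCyl E j a b) := by
  have shift_nat : ∀ (i : ℤ) (n : ℕ), μ (edgeCyl E (i + n) a b) = μ (edgeCyl E i a b) := by
    intro i n
    rw [← preimage_iterate_edgeCyl, (hμ.iterate n).measure_preimage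
      (measurableSet_edgeCyl i a b).nullMeasurableSet]
  rcases le_total i j with h | h
  · obtain ⟨n, rfl⟩ := Int.le.dest h
    exact (shift_nat i n).symm
  · obtain ⟨n, rfl⟩ := Int.le.dest h
    exact shift_nat j n

theorem ae_mem_subShift_supportGraph [Countable V] (hμ : MeasurePreserving (shift2 E) μ μ) :
    ∀ᵐ x ∂μ, x ∈ subShift E (supportGraph E μ) := by
  refine ae_all_iff.2 fun i => measure_mono_null
    (t := ⋃ p : {p : V × V // ¬ supportGraph E μ p.1 p.2}, edgeCyl E i p.1.1 p.1.2) ?_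
    (measure_iUnion_null fun p => ?_)
  · intro x hx
    exact mem_iUnion.2 ⟨⟨(x.1 i, x.1 (i + 1)), hx⟩, rfl, rfl⟩
  · rw [measure_edgeCyl_eq hμ i 0]
    exact nonpos_iff_eq_zero.1 (not_lt.1 p.2)

theorem measure_subShift_eq_one [Countable V] [IsProbabilityMeasure μ]
    (hμ : MeasurePreserving (shift2 E) μ μ)
    (hE' : ∀ a b, supportGraph E μ a b → E' a b) : μ (subShift E E') = 1 := by
  have h : ∀ᵐ x ∂μ, x ∈ subShift E E' :=
    (ae_mem_subShift_supportGraph hμ).mono fun x hx i => hE' _ _ (hx i)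
  exact (measure_congr (ae_eq_univ.2 h)).trans measure_univ

theorem measure_coord_eq_pos_of_mem_verts (hμ : MeasurePreserving (shift2 E) μ μ) {a : V}
    (ha : a ∈ verts (supportGraph E μ)) : 0 < μ {x : CMS E | x.1 0 = a} := by
  rcases ha with ⟨b, hb⟩ | ⟨b, hb⟩
  · exact hb.trans_le (measure_mono fun x hx => hx.1)
  · rw [supportGraph, ← measure_edgeCyl_eq hμ (-1)] at hb
    exact hb.trans_le (measure_mono fun x hx => hx.2)

theorem transGraph_supportGraph [Countable V] [IsFiniteMeasure μ] (hμ : Ergodic (shift2 E) μ) :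
    TransGraph (supportGraph E μ) := by
  intro a ha b hb
  have hinv := hμ.toMeasurePreserving
  obtain ⟨n, hn, hpos⟩ := hμ.exists_measure_inter_preimage_iterate_pos
    (measurableSet_coord_eq 0 b) (measure_coord_eq_pos_of_mem_verts hinv ha).ne'
    (measure_coord_eq_pos_of_mem_verts hinv hb).ne'
  obtain ⟨x, ⟨hxa, hxb⟩, hx⟩ := Measure.exists_mem_of_measure_ne_zero_of_ae hpos
    (ae_restrict_of_ae (ae_mem_subShift_supportGraph hinv))
  simp only [mem_preimage, mem_ofPred_eq, shift2_iterate_apply, zero_add] at hxa hxb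
  exact ⟨n, hn, hxa ▸ hxb ▸ hasPath_of_mem_subShift hx n⟩

end Shift

section Disjointness

variable {V : Type*} [Countable V] [MeasurableSpace V] [DiscreteMeasurableSpace V]
  {E : V → V → Prop} {μ₁ μ₂ : Measure (CMS E)} [IsProbabilityMeasure μ₁] [IsProbabilityMeasure μ₂]

theorem exists_transGraph_measure_subShift_eq_one (he₁ : Ergodic (shift2 E) μ₁)
    (he₂ : Ergodic (shift2 E) μ₂) {v : V} (hv₁ : v ∈ verts (supportGraph E μ₁))
    (hv₂ : v ∈ verts (supportGraph E μ₂)) :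
    ∃ E' : V → V → Prop, (∀ a b, E' a b → E a b) ∧ TransGraph E' ∧
      μ₁ (subShift E E') = 1 ∧ μ₂ (subShift E E') = 1 :=
  ⟨supportGraph E μ₁ ⊔ supportGraph E μ₂,
    fun _ _ h => h.elim supportGraph_le supportGraph_le,
    (transGraph_supportGraph he₁).sup (transGraph_supportGraph he₂) hv₁ hv₂,
    measure_subShift_eq_one he₁.toMeasurePreserving fun _ _ => Or.inl,
    measure_subShift_eq_one he₂.toMeasurePreserving fun _ _ => Or.inr⟩

end Disjointness

/-- If every topologically transitive sub-shift `Σ(H)` of `Σ(G)` carries at most one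
equilibrium measure for `ψ`, and the support of such a measure is all of `Σ(H)`, then `ψ` has
at most countably many ergodic equilibrium measures.  (The set of equilibrium measures of `ψ`
is abstracted as a set `EqM` of shift-invariant probability measures satisfying these two
hypotheses.) -/
theorem stmt19 {V : Type*} [Countable V] [MeasurableSpace V] [DiscreteMeasurableSpace V]
    (E : V → V → Prop) (EqM : Set (Measure (CMS E)))
    (hmem : ∀ μ ∈ EqM, IsProbabilityMeasure μ ∧ MeasurePreserving (shift2 E) μ μ)
    (huniq : ∀ E' : V → V → Prop, (∀ a b, E' a b → E a b) → TransGraph E' →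
      Set.Subsingleton {μ | μ ∈ EqM ∧ μ (subShift E E') = 1} ∧
      ∀ μ ∈ EqM, μ (subShift E E') = 1 → FullSupportOn E E' μ) :
    Set.Countable {μ | μ ∈ EqM ∧ Ergodic (shift2 E) μ} := by
  set S := {μ | μ ∈ EqM ∧ Ergodic (shift2 E) μ}
  have hS : S ⊆ ⋃ v : V, {μ ∈ S | v ∈ verts (supportGraph E μ)} := by
    intro μ hμ
    have := (hmem μ hμ.1).1
    obtain ⟨v, hv⟩ := nonempty_verts_supportGraph (μ := μ)
    exact mem_iUnion.2 ⟨v, hμ, hv⟩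
  refine (countable_iUnion fun v => Subsingleton.countable ?_).mono hS
  rintro μ₁ ⟨⟨h₁, he₁⟩, hv₁⟩ μ₂ ⟨⟨h₂, he₂⟩, hv₂⟩
  have := (hmem μ₁ h₁).1
  have := (hmem μ₂ h₂).1
  obtain ⟨E', hE', hE'_trans, hμ₁, hμ₂⟩ :=
    exists_transGraph_measure_subShift_eq_one he₁ he₂ hv₁ hv₂
  exact (huniq E' hE' hE'_trans).1 ⟨h₁, hμ₁⟩ ⟨h₂, hμ₂⟩
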